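/- For every x ∈ [0,1]³ one has max{m₁(x), m₂(x), m₃(x)} ≤ min{M₁(x), M₂(x), M₃(x)}; consequently the interval [max{0, m₁(x)}, min{M₁(x), M₂(x), M₃(x), 1}] is nonempty. -/
import Mathlib


/-- `s(x) = x₁+x₂+x₃−x₁x₂−x₁x₃−x₂x₃`. -/
def sPoly (x : Fin 3 → ℝ) : ℝ :=
  x 0 + x 1 + x 2 - x 0 * x 1 - x 0 * x 2 - x 1 * x 2

/-- `m₁(x) = max{−x₁(1−x₂−x₃), −x₂(1−x₁−x₃), −x₃(1−x₁−x₂)}`. -/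
def m1 (x : Fin 3 → ℝ) : ℝ :=
  max (max (-(x 0) * (1 - x 1 - x 2)) (-(x 1) * (1 - x 0 - x 2)))
    (-(x 2) * (1 - x 0 - x 1))

/-- `m₂(x) = max{x₁x₂−1, x₁x₃−1, x₂x₃−1}`. -/
def m2 (x : Fin 3 → ℝ) : ℝ :=
  max (max (x 0 * x 1 - 1) (x 0 * x 2 - 1)) (x 1 * x 2 - 1)

/-- `m₃(x) = −s(x)`. -/
def m3 (x : Fin 3 → ℝ) : ℝ := -sPoly x

/-- `M₁(x) = min{1−x₁(1−x₂−x₃), 1−x₂(1−x₁−x₃), 1−x₃(1−x₁−x₂)}`. -/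
def M1 (x : Fin 3 → ℝ) : ℝ :=
  min (min (1 - x 0 * (1 - x 1 - x 2)) (1 - x 1 * (1 - x 0 - x 2)))
    (1 - x 2 * (1 - x 0 - x 1))

/-- `M₂(x) = min{x₁x₂, x₁x₃, x₂x₃}`. -/
def M2 (x : Fin 3 → ℝ) : ℝ :=
  min (min (x 0 * x 1) (x 0 * x 2)) (x 1 * x 2)

/-- `M₃(x) = 1−s(x)`. -/
def M3 (x : Fin 3 → ℝ) : ℝ := 1 - sPoly x

set_option maxHeartbeats 2000000 in
theorem max_m_le_min_M (x : Fin 3 → ℝ) (hx : ∀ i, x i ∈ Set.Icc (0 : ℝ) 1) :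
    max (max (m1 x) (m2 x)) (m3 x) ≤ min (min (M1 x) (M2 x)) (M3 x) ∧
    (Set.Icc (max 0 (m1 x)) (min (min (min (M1 x) (M2 x)) (M3 x)) 1)).Nonempty := by

  obtain ⟨a0, a1⟩ := hx 0
  obtain ⟨b0, b1⟩ := hx 1
  obtain ⟨c0, c1⟩ := hx 2
  simp only [m1, m2, m3, M1, M2, M3, sPoly, max_le_iff, le_min_iff, Set.nonempty_Icc]
  refine ⟨?_, ?_⟩ <;> and_intros <;>
    nlinarith [mul_nonneg a0 b0, mul_nonneg a0 c0, mul_nonneg b0 c0,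
      mul_nonneg (mul_nonneg a0 b0) c0,
      mul_nonneg (sub_nonneg.2 a1) (sub_nonneg.2 b1),
      mul_nonneg (sub_nonneg.2 a1) (sub_nonneg.2 c1),
      mul_nonneg (sub_nonneg.2 b1) (sub_nonneg.2 c1),
      mul_nonneg (mul_nonneg (sub_nonneg.2 a1) (sub_nonneg.2 b1)) (sub_nonneg.2 c1),
      mul_nonneg (mul_nonneg a0 b0) (sub_nonneg.2 c1),
      mul_nonneg (mul_nonneg a0 c0) (sub_nonneg.2 b1),
      mul_nonneg (mul_nonneg b0 c0) (sub_nonneg.2 a1),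
      mul_nonneg (mul_nonneg a0 (sub_nonneg.2 b1)) (sub_nonneg.2 c1),
      mul_nonneg (mul_nonneg b0 (sub_nonneg.2 a1)) (sub_nonneg.2 c1),
      mul_nonneg (mul_nonneg c0 (sub_nonneg.2 a1)) (sub_nonneg.2 b1)]
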